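/- Let ψ, ψ' ∈ ℂ^d be unit vectors and F ⊆ {1, ..., d}. Suppose ∑_{i ∈ F} |ψᵢ|² ≥ 1/2 + ε and ∑_{i ∉ F} |ψ'ᵢ|² ≥ 1/2 + ε for some ε ∈ (3/8, 1/2]. Then ‖ψ - ψ'‖² ≥ 1 + 2ε - 4√(1/2 - ε). -/

import Mathlib

/-!
Since `‖ψ - ψ'‖² = 2 - 2 re ⟪ψ, ψ'⟫`, it suffices to bound the overlap. Splitting
`∑ |ψᵢ| |ψ'ᵢ|` over `F` and `Fᶜ`, on each part one of the two vectors carries mass at most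
`1/2 - ε`, so Cauchy–Schwarz bounds each part by `√(1/2 - ε)`.
-/

open scoped InnerProductSpace

namespace EuclideanSpace

variable {𝕜 ι : Type*} [RCLike 𝕜] [Fintype ι]

theorem norm_inner_le_sum_norm_mul_norm (x y : EuclideanSpace 𝕜 ι) :
    ‖⟪x, y⟫_𝕜‖ ≤ ∑ i, ‖x i‖ * ‖y i‖ := by
  rw [PiLp.inner_apply]
  exact (norm_sum_le _ _).trans (Finset.sum_le_sum fun i _ => norm_inner_le_norm _ _)

theorem sum_norm_sq_le_norm_sq (x : EuclideanSpace 𝕜 ι) (s : Finset ι) :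
    ∑ i ∈ s, ‖x i‖ ^ 2 ≤ ‖x‖ ^ 2 := by
  rw [norm_sq_eq]
  exact Finset.sum_le_univ_sum_of_nonneg fun _ => sq_nonneg _

theorem sum_compl_norm_sq [DecidableEq ι] (x : EuclideanSpace 𝕜 ι) (s : Finset ι) :
    ∑ i ∈ sᶜ, ‖x i‖ ^ 2 = ‖x‖ ^ 2 - ∑ i ∈ s, ‖x i‖ ^ 2 := by
  rw [norm_sq_eq, ← Finset.sum_add_sum_compl s]
  ring

theorem sum_norm_mul_norm_le (x y : EuclideanSpace 𝕜 ι) (s : Finset ι) {η : ℝ}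
    (hy : ∑ i ∈ s, ‖y i‖ ^ 2 ≤ η) : ∑ i ∈ s, ‖x i‖ * ‖y i‖ ≤ ‖x‖ * √η := by
  calc ∑ i ∈ s, ‖x i‖ * ‖y i‖ ≤ √(∑ i ∈ s, ‖x i‖ ^ 2) * √(∑ i ∈ s, ‖y i‖ ^ 2) :=
        Real.sum_mul_le_sqrt_mul_sqrt s _ _
    _ ≤ ‖x‖ * √η := by
        gcongr
        exact (Real.sqrt_le_sqrt (sum_norm_sq_le_norm_sq x s)).trans_eq
          (Real.sqrt_sq (norm_nonneg x))

theorem re_inner_le_add_mul_sqrt [DecidableEq ι] (x y : EuclideanSpace 𝕜 ι) (s : Finset ι)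
    {η : ℝ} (hx : ∑ i ∈ sᶜ, ‖x i‖ ^ 2 ≤ η) (hy : ∑ i ∈ s, ‖y i‖ ^ 2 ≤ η) :
    RCLike.re ⟪x, y⟫_𝕜 ≤ (‖x‖ + ‖y‖) * √η := by
  calc RCLike.re ⟪x, y⟫_𝕜 ≤ ‖⟪x, y⟫_𝕜‖ := RCLike.re_le_norm _
    _ ≤ ∑ i, ‖x i‖ * ‖y i‖ := norm_inner_le_sum_norm_mul_norm x y
    _ = ∑ i ∈ s, ‖x i‖ * ‖y i‖ + ∑ i ∈ sᶜ, ‖x i‖ * ‖y i‖ :=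
        (Finset.sum_add_sum_compl s _).symm
    _ ≤ ‖x‖ * √η + ‖y‖ * √η := by
        gcongr
        · exact sum_norm_mul_norm_le x y s hy
        · simpa only [mul_comm] using sum_norm_mul_norm_le y x sᶜ hx
    _ = (‖x‖ + ‖y‖) * √η := by ring

theorem two_sub_four_mul_sqrt_le_norm_sub_sq [DecidableEq ι] {x y : EuclideanSpace 𝕜 ι}
    (hx₁ : ‖x‖ = 1) (hy₁ : ‖y‖ = 1) (s : Finset ι) {η : ℝ}
    (hx : ∑ i ∈ sᶜ, ‖x i‖ ^ 2 ≤ η) (hy : ∑ i ∈ s, ‖y i‖ ^ 2 ≤ η) :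
    2 - 4 * √η ≤ ‖x - y‖ ^ 2 := by
  have hre := re_inner_le_add_mul_sqrt x y s hx hy
  rw [hx₁, hy₁] at hre
  rw [@norm_sub_sq 𝕜, hx₁, hy₁]
  linarith

end EuclideanSpace

theorem distance_sq_lower_bound_general (d : ℕ)
    (ψ ψ' : EuclideanSpace ℂ (Fin d)) (hψ : ‖ψ‖ = 1) (hψ' : ‖ψ'‖ = 1)
    (F : Finset (Fin d)) (ε : ℝ) (hε : ε ∈ Set.Ioc (3/8 : ℝ) (1/2 : ℝ))
    (hacc : (1/2 : ℝ) + ε ≤ ∑ i ∈ F, ‖ψ i‖ ^ 2)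
    (hrej : (1/2 : ℝ) + ε ≤ ∑ i ∈ Fᶜ, ‖ψ' i‖ ^ 2) :
    1 + 2 * ε - 4 * Real.sqrt (1/2 - ε) ≤ ‖ψ - ψ'‖ ^ 2 := by
  have hψ_compl : ∑ i ∈ Fᶜ, ‖ψ i‖ ^ 2 ≤ 1/2 - ε := by
    rw [EuclideanSpace.sum_compl_norm_sq, hψ]
    linarith
  have hψ'_F : ∑ i ∈ F, ‖ψ' i‖ ^ 2 ≤ 1/2 - ε := by
    have hsplit := EuclideanSpace.sum_compl_norm_sq ψ' F
    rw [hψ'] at hsplit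
    linarith
  linarith [hε.2,
    EuclideanSpace.two_sub_four_mul_sqrt_le_norm_sub_sq hψ hψ' F hψ_compl hψ'_F]

theorem distance_sq_lower_bound (d : ℕ) (hd : 0 < d)
    (ψ ψ' : EuclideanSpace ℂ (Fin d)) (hψ : ‖ψ‖ = 1) (hψ' : ‖ψ'‖ = 1)
    (F : Finset (Fin d)) (ε : ℝ) (hε : ε ∈ Set.Ioc (3/8 : ℝ) (1/2 : ℝ))
    (hacc : (1/2 : ℝ) + ε ≤ ∑ i ∈ F, ‖ψ i‖ ^ 2)
    (hrej : (1/2 : ℝ) + ε ≤ ∑ i ∈ Fᶜ, ‖ψ' i‖ ^ 2) :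
    1 + 2 * ε - 4 * Real.sqrt (1/2 - ε) ≤ ‖ψ - ψ'‖ ^ 2 :=
  distance_sq_lower_bound_general d ψ ψ' hψ hψ' F ε hε hacc hrej
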